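/- Let V be a finite nonempty type, let G be a group acting on V, and let H be a real symmetric matrix indexed by V such that: (i) H_{u,v} ≤ 0 for all u ≠ v; (ii) H is irreducible (for all u,v there is a sequence u = x₀, …, x_m = v with H_{x_j,x_{j+1}} ≠ 0 for each j); and (iii) H is G-invariant, H_{g•u, g•v} = H_{u,v} for all g,u,v. Let R be a set of orbit representatives and define H' : R → R → ℝ by H'(r,r') := Σ_{v ∈ O_{r'}} H_{r,v}. Then there exists a vector ψ : R → ℝ with ψ(r) > 0 for all r ∈ R such that Σ_{r' ∈ R} H'(r,r')·ψ(r') = λ₀(H)·ψ(r) for all r ∈ R, where λ₀(H) is the smallest eigenvalue of H; i.e., the smallest eigenvalue of H is an eigenvalue of the effective matrix H' with a strictly positive right eigenvector, given by the restriction to R of the positive ground state of H. -/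

import Mathlib

/-! If `b` is a ground state of `H`, so is `|b|`: nonpositive off-diagonal entries mean that passing
to absolute values can only lower the quadratic form, which is already minimal at `b`.
Irreducibility then makes `|b|` strictly positive, since a zero of a nonnegative eigenvector
propagates to every neighbour. Averaging over the finite image of `G` in the permutations of `V`
gives a positive `G`-invariant ground state `ψ`, and as `ψ` is constant on orbits, grouping the
eigen-equation `(Hψ)(r) = λ₀ ψ(r)` by orbits is exactly the effective equation on `R`. -/

open MulAction Finset

noncomputable def orbitFinset (G : Type*) {V : Type*} [Group G] [MulAction G V] [Fintype V]
    (u : V) : Finset V :=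
  (MulAction.orbit G u).toFinite.toFinset

def IsOrbitReps (G : Type*) {V : Type*} [Group G] [MulAction G V] [Fintype V]
    (R : Finset V) : Prop :=
  ∀ v : V, ∃! r, r ∈ R ∧ r ∈ MulAction.orbit G v

open Matrix

namespace Matrix

open scoped MatrixOrder ComplexOrder

variable {n : Type*} [Fintype n]

theorem IsHermitian.posSemidef_sub_smul_one {𝕜 : Type*} [RCLike 𝕜] [DecidableEq n]
    {A : Matrix n n 𝕜} (hA : A.IsHermitian) {c : ℝ} (hc : ∀ i, c ≤ hA.eigenvalues i) :
    (A - c • (1 : Matrix n n 𝕜)).PosSemidef := by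
  rw [← Matrix.le_iff, ← Algebra.algebraMap_eq_smul_one,
    algebraMap_le_iff_le_spectrum hA.isSelfAdjoint, hA.spectrum_real_eq_range_eigenvalues]
  rintro _ ⟨i, rfl⟩
  exact hc i

theorem PosSemidef.mulVec_eq_smul_of_dotProduct_le [DecidableEq n] {A : Matrix n n ℝ} {c : ℝ}
    (hA : (A - c • 1).PosSemidef) {x : n → ℝ} (hx : x ⬝ᵥ A *ᵥ x ≤ c * (x ⬝ᵥ x)) :
    A *ᵥ x = c • x := by
  have hq : x ⬝ᵥ (A - c • 1) *ᵥ x = 0 := by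
    refine le_antisymm ?_ (by simpa using hA.dotProduct_mulVec_nonneg x)
    simpa [sub_mulVec, dotProduct_sub, smul_mulVec, dotProduct_smul] using hx
  have := (hA.dotProduct_mulVec_zero_iff x).mp (by simpa using hq)
  rwa [sub_mulVec, smul_mulVec, one_mulVec, sub_eq_zero] at this

theorem dotProduct_mulVec_abs_le {A : Matrix n n ℝ} (hoff : ∀ u v, u ≠ v → A u v ≤ 0)
    (x : n → ℝ) : |x| ⬝ᵥ A *ᵥ |x| ≤ x ⬝ᵥ A *ᵥ x := by
  simp only [dotProduct, mulVec, mul_sum, Pi.abs_apply]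
  refine sum_le_sum fun u _ => sum_le_sum fun v _ => ?_
  rcases eq_or_ne u v with rfl | huv
  · rw [mul_left_comm, abs_mul_abs_self, mul_left_comm]
  · rw [mul_left_comm, ← abs_mul, mul_left_comm (x u)]
    exact mul_le_mul_of_nonpos_left (le_abs_self _) (hoff u v huv)

theorem eq_zero_of_mulVec_eq_smul_of_eq_zero {A : Matrix n n ℝ} (hoff : ∀ u v, u ≠ v → A u v ≤ 0)
    {a : n → ℝ} (ha : 0 ≤ a) {c : ℝ} (heig : A *ᵥ a = c • a) {u v : n} (hu : a u = 0)
    (huv : A u v ≠ 0) : a v = 0 := by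
  have hterm : ∀ w ∈ univ, A u w * a w ≤ 0 := fun w _ => by
    rcases eq_or_ne u w with rfl | hw
    · simp [hu]
    · exact mul_nonpos_of_nonpos_of_nonneg (hoff u w hw) (ha w)
  have hsum : ∑ w, A u w * a w = 0 := by
    simpa [mulVec, dotProduct, hu] using congrFun heig u
  exact (mul_eq_zero.mp ((sum_eq_zero_iff_of_nonpos hterm).mp hsum v (mem_univ v))).resolve_left huv

theorem pos_of_mulVec_eq_smul {A : Matrix n n ℝ} (hoff : ∀ u v, u ≠ v → A u v ≤ 0)
    (hirr : ∀ u v : n, ∃ (m : ℕ) (x : ℕ → n), x 0 = u ∧ x m = v ∧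
      ∀ j < m, A (x j) (x (j + 1)) ≠ 0)
    {a : n → ℝ} (ha : 0 ≤ a) (ha0 : a ≠ 0) {c : ℝ} (heig : A *ᵥ a = c • a) (v : n) :
    0 < a v := by
  refine (ha v).lt_of_ne' fun hv => ha0 (funext fun w => ?_)
  obtain ⟨m, x, hx0, hxm, hstep⟩ := hirr v w
  have hpath : ∀ j ≤ m, a (x j) = 0 := by
    intro j
    induction j with
    | zero => exact fun _ => hx0 ▸ hv
    | succ j ih =>
      exact fun hj => eq_zero_of_mulVec_eq_smul_of_eq_zero hoff ha heig (ih (by omega))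
        (hstep j (by omega))
  simpa [hxm] using hpath m le_rfl

theorem IsHermitian.exists_pos_mulVec_eq_inf'_eigenvalues_smul [Nonempty n] [DecidableEq n]
    {A : Matrix n n ℝ} (hA : A.IsHermitian) (hoff : ∀ u v, u ≠ v → A u v ≤ 0)
    (hirr : ∀ u v : n, ∃ (m : ℕ) (x : ℕ → n), x 0 = u ∧ x m = v ∧
      ∀ j < m, A (x j) (x (j + 1)) ≠ 0) :
    ∃ a : n → ℝ, (∀ v, 0 < a v) ∧ A *ᵥ a = univ.inf' univ_nonempty hA.eigenvalues • a := by
  obtain ⟨i, -, hi⟩ := exists_mem_eq_inf' univ_nonempty hA.eigenvalues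
  rw [hi]
  set b : n → ℝ := ⇑(hA.eigenvectorBasis i)
  have hb : A *ᵥ b = hA.eigenvalues i • b := hA.mulVec_eigenvectorBasis i
  have hb0 : b ≠ 0 := (WithLp.ofLp_eq_zero 2).ne.2 <| hA.eigenvectorBasis.orthonormal.ne_zero i
  have habs : |b| ⬝ᵥ |b| = b ⬝ᵥ b := by simp [dotProduct, abs_mul_abs_self]
  have hpsd := hA.posSemidef_sub_smul_one fun j => hi ▸ inf'_le _ (mem_univ j)
  have heig : A *ᵥ |b| = hA.eigenvalues i • |b| := hpsd.mulVec_eq_smul_of_dotProduct_le <| by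
    calc |b| ⬝ᵥ A *ᵥ |b| ≤ b ⬝ᵥ A *ᵥ b := dotProduct_mulVec_abs_le hoff b
      _ = hA.eigenvalues i * (|b| ⬝ᵥ |b|) := by rw [hb, dotProduct_smul, habs, smul_eq_mul]
  exact ⟨|b|, pos_of_mulVec_eq_smul hoff hirr (abs_nonneg b) (by simpa using hb0) heig, heig⟩

theorem mulVec_sum_comp_smul {R : Type*} [CommSemiring R] {K : Type*} [Group K] [Fintype K]
    [MulAction K n] {A : Matrix n n R} (hinv : ∀ (k : K) u v, A (k • u) (k • v) = A u v)
    {a : n → R} {c : R} (heig : A *ᵥ a = c • a) :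
    A *ᵥ (fun v => ∑ k : K, a (k • v)) = c • fun v => ∑ k : K, a (k • v) := by
  ext u
  have hk : ∀ k : K, ∑ v, A u v * a (k • v) = c * a (k • u) := fun k => by
    calc ∑ v, A u v * a (k • v) = ∑ v, A (k • u) (k • v) * a (k • v) := by simp only [hinv]
      _ = ∑ w, A (k • u) w * a w :=
        Equiv.sum_comp (MulAction.toPerm k) fun w => A (k • u) w * a w
      _ = c * a (k • u) := congrFun heig (k • u)
  simp only [mulVec, dotProduct, mul_sum, Pi.smul_apply, smul_eq_mul]
  rw [sum_comm]
  exact sum_congr rfl fun k _ => hk k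

theorem IsHermitian.exists_pos_invariant_mulVec_eq_inf'_eigenvalues_smul [Nonempty n]
    [DecidableEq n] {G : Type*} [Group G] [MulAction G n] {A : Matrix n n ℝ}
    (hA : A.IsHermitian) (hoff : ∀ u v, u ≠ v → A u v ≤ 0)
    (hirr : ∀ u v : n, ∃ (m : ℕ) (x : ℕ → n), x 0 = u ∧ x m = v ∧
      ∀ j < m, A (x j) (x (j + 1)) ≠ 0)
    (hinv : ∀ (g : G) u v, A (g • u) (g • v) = A u v) :
    ∃ ψ : n → ℝ, (∀ v, 0 < ψ v) ∧ A *ᵥ ψ = univ.inf' univ_nonempty hA.eigenvalues • ψ ∧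
      ∀ (g : G) v, ψ (g • v) = ψ v := by
  obtain ⟨a, hpos, heig⟩ := hA.exists_pos_mulVec_eq_inf'_eigenvalues_smul hoff hirr
  -- `G` may be infinite, so average over its (finite) image in `Equiv.Perm n`.
  let K := (toPermHom G n).range
  have : Fintype K := Fintype.ofFinite K
  have hinvK : ∀ (k : K) u v, A (k • u) (k • v) = A u v := by
    rintro ⟨_, g, rfl⟩ u v
    exact hinv g u v
  refine ⟨fun v => ∑ k : K, a (k • v), fun v => sum_pos (fun k _ => hpos _) univ_nonempty,
    mulVec_sum_comp_smul hinvK heig, fun g v => ?_⟩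
  exact Fintype.sum_equiv (Equiv.mulRight ⟨toPermHom G n g, g, rfl⟩) _ _ fun _ => rfl

end Matrix

theorem mem_orbitFinset {G V : Type*} [Group G] [MulAction G V] [Fintype V] {u v : V} :
    v ∈ orbitFinset G u ↔ v ∈ orbit G u :=
  Set.Finite.mem_toFinset _

theorem IsOrbitReps.sum_sum_orbitFinset {G V : Type*} [Group G] [MulAction G V] [Fintype V]
    {R : Finset V} (hR : IsOrbitReps G R) {M : Type*} [AddCommMonoid M] (f : V → M) :
    ∑ r ∈ R, ∑ v ∈ orbitFinset G r, f v = ∑ v, f v := by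
  classical
  have hdisj : (R : Set V).PairwiseDisjoint (orbitFinset G) := by
    intro r₁ h₁ r₂ h₂ hne
    refine disjoint_left.mpr fun v hv₁ hv₂ => hne ?_
    obtain ⟨r, -, huniq⟩ := hR v
    exact (huniq r₁ ⟨h₁, mem_orbit_symm.mp (mem_orbitFinset.mp hv₁)⟩).trans
      (huniq r₂ ⟨h₂, mem_orbit_symm.mp (mem_orbitFinset.mp hv₂)⟩).symm
  have hcover : R.biUnion (orbitFinset G) = univ := by
    refine eq_univ_of_forall fun v => mem_biUnion.mpr ?_
    obtain ⟨r, ⟨hr, hvr⟩, -⟩ := hR v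
    exact ⟨r, hr, mem_orbitFinset.mpr (mem_orbit_symm.mp hvr)⟩
  rw [← sum_biUnion hdisj, hcover]

/-- for a real symmetric, stoquastic, irreducible, `G`-invariant matrix `H`,
the smallest eigenvalue `λ₀(H)` is an eigenvalue of the effective matrix
`H'(r,r') = Σ_{v ∈ O_{r'}} H_{r,v}` on a set of orbit representatives `R`, with a strictly
positive right eigenvector. -/
theorem effective_matrix_ground_eigenvalue {V G : Type*} [Fintype V] [DecidableEq V]
    [Nonempty V] [Group G] [MulAction G V]
    (H : Matrix V V ℝ) (hH : H.IsHermitian)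
    (hoff : ∀ u v : V, u ≠ v → H u v ≤ 0)
    (hirr : ∀ u v : V, ∃ (m : ℕ) (x : ℕ → V), x 0 = u ∧ x m = v ∧
      ∀ j < m, H (x j) (x (j + 1)) ≠ 0)
    (hinv : ∀ (g : G) (u v : V), H (g • u) (g • v) = H u v)
    (R : Finset V) (hR : IsOrbitReps G R) :
    ∃ ψ : V → ℝ, (∀ r ∈ R, 0 < ψ r) ∧
      ∀ r ∈ R, ∑ r' ∈ R, (∑ v ∈ orbitFinset G r', H r v) * ψ r' =
        (Finset.univ.inf' Finset.univ_nonempty hH.eigenvalues) * ψ r := by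
  obtain ⟨ψ, hpos, heig, hψ⟩ :=
    hH.exists_pos_invariant_mulVec_eq_inf'_eigenvalues_smul hoff hirr hinv
  refine ⟨ψ, fun r _ => hpos r, fun r _ => ?_⟩
  have horbit : ∀ r', ∀ v ∈ orbitFinset G r', ψ v = ψ r' := fun r' v hv => by
    obtain ⟨g, rfl⟩ := mem_orbitFinset.mp hv
    exact hψ g r'
  calc ∑ r' ∈ R, (∑ v ∈ orbitFinset G r', H r v) * ψ r'
      = ∑ r' ∈ R, ∑ v ∈ orbitFinset G r', H r v * ψ v := by
        refine sum_congr rfl fun r' _ => ?_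
        rw [sum_mul]
        exact sum_congr rfl fun v hv => by rw [horbit r' v hv]
    _ = (H *ᵥ ψ) r := hR.sum_sum_orbitFinset _
    _ = _ := congrFun heig r
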